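/- Terminating Saalschütz-type evaluation used in Slater's proof: Let a, b be complex numbers and N a nonnegative integer such that no denominator factor vanishes (in particular (1+a−b)_k, (1/2+a/2)_k are nonzero for 0 ≤ k ≤ N and (1/2 − a/2 − N)_N ≠ 0). Then ∑_{k=0}^{N} (1/2 + a/2 − b)_k (a+N)_k (−N)_k / ((1+a−b)_k (1/2 + a/2)_k k!) = (1/2 + a/2)_N (1 − b − N)_N / ((1+a−b)_N (1/2 − a/2 − N)_N). -/

import Mathlib

/-!
The sum is the balanced series `₃F₂(-N, x, y; z, 1 + x + y - z - N; 1)` with `x = 1/2 + a/2 - b`,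
`y = a + N`, `z = 1 + a - b`, so it is an instance of the Pfaff–Saalschütz theorem. Multiplying by
`(z)_N (z - x - y)_N` turns that theorem into the polynomial identity
`∑ₖ C(N,k) (x)_k (y)_k (z-x-y)_{N-k} (z+k)_{N-k} = (z-x)_N (z-y)_N`,
which follows from the Chu–Vandermonde identity `(p+q)_m = ∑ᵢ C(m,i) (p)_i (q)_{m-i}` used three
times: expand `(z+k)_{N-k}` with `p = z - x`, exchange the two summations, and collapse the inner
and then the outer sum.
-/

open Complex Finset Filter Topology

/-- The Pochhammer symbol `(x)_k = x (x+1) ⋯ (x+k-1)`. -/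
noncomputable def poch (x : ℂ) (k : ℕ) : ℂ := (ascPochhammer ℂ k).eval x

lemma poch_add (x : ℂ) (m n : ℕ) : poch x (m + n) = poch x m * poch (x + m) n := by
  simp [poch, ← ascPochhammer_mul, Polynomial.eval_comp]

lemma poch_succ (x : ℂ) (n : ℕ) : poch x (n + 1) = poch x n * (x + n) := by
  simp [poch, ascPochhammer_succ_eval]

lemma poch_eq_poch_mul_poch {m n : ℕ} (x : ℂ) (h : m ≤ n) :
    poch x n = poch x m * poch (x + m) (n - m) := by
  rw [← poch_add, Nat.add_sub_cancel' h]

lemma poch_neg (x : ℂ) (k : ℕ) : poch (-x) k = (-1) ^ k * poch (x - k + 1) k := by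
  rw [poch, ascPochhammer_eval_neg_eq_descPochhammer, descPochhammer_eval_eq_ascPochhammer, poch]

lemma poch_neg_natCast (N k : ℕ) : poch (-N) k = (-1) ^ k * (k.factorial * N.choose k) := by
  rw [poch, ascPochhammer_eval_neg_eq_descPochhammer, descPochhammer_eval_eq_descFactorial,
    Nat.descFactorial_eq_factorial_mul_choose, Nat.cast_mul]

/-- The last `k` factors of `(c)_N`, read backwards, form `(1 - c - N)_k` up to sign. -/
lemma poch_eq_poch_mul_neg_one_pow_mul_poch (c : ℂ) {k N : ℕ} (h : k ≤ N) :
    poch c N = poch c (N - k) * ((-1) ^ k * poch (1 - c - N) k) := by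
  rw [poch_eq_poch_mul_poch c (Nat.sub_le N k), Nat.sub_sub_self h,
    show 1 - c - N = -(c + (N - k : ℕ) + k - 1) by push_cast [h]; ring, poch_neg,
    show c + (N - k : ℕ) + k - 1 - k + 1 = c + (N - k : ℕ) by ring,
    ← mul_assoc ((-1 : ℂ) ^ k), ← mul_pow]
  norm_num

lemma poch_add_eq_sum_antidiagonal (p q : ℂ) (m : ℕ) :
    poch (p + q) m = ∑ ij ∈ antidiagonal m, m.choose ij.1 * (poch p ij.1 * poch q ij.2) := by
  induction m with
  | zero => simp [poch]
  | succ m ih =>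
    rw [sum_antidiagonal_choose_succ_mul (fun i j => poch p i * poch q j), poch_succ, ih, sum_mul,
      ← sum_add_distrib]
    refine sum_congr rfl fun ij hij => ?_
    rw [HasAntidiagonal.mem_antidiagonal] at hij
    rw [← Nat.choose_symm_of_eq_add hij.symm, poch_succ, poch_succ, ← hij]
    push_cast
    ring

lemma poch_add_eq_sum_range (p q : ℂ) {m N : ℕ} (h : m ≤ N) :
    poch (p + q) m = ∑ i ∈ range (N + 1), (m.choose i : ℂ) * (poch p i * poch q (m - i)) := by
  rw [poch_add_eq_sum_antidiagonal, Nat.sum_antidiagonal_eq_sum_range_succ_mk]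
  refine sum_subset (range_subset_range.mpr (by omega)) fun i _ hi => ?_
  rw [Nat.choose_eq_zero_of_lt (by simp at hi; omega), Nat.cast_zero, zero_mul]

lemma choose_mul_choose_sub_comm {N k j : ℕ} (hk : k ≤ N) (hj : j ≤ N) :
    N.choose k * (N - k).choose j = N.choose j * (N - j).choose k := by
  by_cases h : k + j ≤ N
  · have e1 := Nat.choose_mul (n := N) (k := k + j) (s := k) (Nat.le_add_right _ _)
    have e2 := Nat.choose_mul (n := N) (k := k + j) (s := j) (Nat.le_add_left _ _)
    rw [Nat.add_sub_cancel_left] at e1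
    rw [Nat.add_sub_cancel] at e2
    rw [← e1, ← e2, Nat.choose_symm_add]
  · rw [Nat.choose_eq_zero_of_lt (by omega : N - k < j),
      Nat.choose_eq_zero_of_lt (by omega : N - j < k), Nat.mul_zero, Nat.mul_zero]

lemma choose_mul_poch_comm (x c : ℂ) {N k j : ℕ} (hk : k ≤ N) (hj : j ≤ N) :
    (N.choose k * (N - k).choose j : ℂ) * (poch x k * poch (x + k) (N - k - j)) * poch c (N - k) =
      (N.choose j * (N - j).choose k : ℂ) * poch x (N - j) *
        (poch c j * poch (c + j) (N - j - k)) := by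
  by_cases hkj : k + j ≤ N
  · rw [← Nat.cast_mul, ← Nat.cast_mul, choose_mul_choose_sub_comm hk hj,
      poch_eq_poch_mul_poch x (show k ≤ N - j by omega),
      poch_eq_poch_mul_poch c (show j ≤ N - k by omega), Nat.sub_right_comm N j k]
  · rw [Nat.choose_eq_zero_of_lt (by omega : N - k < j),
      Nat.choose_eq_zero_of_lt (by omega : N - j < k)]
    simp

theorem pfaff_saalschutz_polynomial_form (x y z : ℂ) (N : ℕ) :
    ∑ k ∈ range (N + 1), (N.choose k : ℂ) * poch x k * poch y k
        * poch (z - x - y) (N - k) * poch (z + k) (N - k)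
      = poch (z - x) N * poch (z - y) N := by
  set c := z - x - y
  have hmem {i : ℕ} (hi : i ∈ range (N + 1)) : i ≤ N := Nat.lt_succ_iff.mp (mem_range.mp hi)
  calc _ = ∑ k ∈ range (N + 1), ∑ j ∈ range (N + 1),
          (N.choose k * (N - k).choose j : ℂ) * (poch x k * poch (x + k) (N - k - j)) *
            poch c (N - k) * (poch y k * poch (z - x) j) := by
        refine sum_congr rfl fun k _ => ?_
        rw [show z + k = (z - x) + (x + k) by ring, poch_add_eq_sum_range _ _ (Nat.sub_le N k),
          mul_sum]
        exact sum_congr rfl fun j _ => by ring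
    _ = ∑ j ∈ range (N + 1), (N.choose j * poch c j * poch x (N - j) * poch (z - x) j) *
          ∑ k ∈ range (N + 1), ((N - j).choose k : ℂ) * (poch y k * poch (c + j) (N - j - k)) := by
        rw [sum_comm]
        refine sum_congr rfl fun j hj => ?_
        rw [mul_sum]
        refine sum_congr rfl fun k hk => ?_
        rw [choose_mul_poch_comm x c (hmem hk) (hmem hj)]
        ring
    _ = ∑ j ∈ range (N + 1), (N.choose j : ℂ) * (poch c j * poch x (N - j)) * poch (z - x) N := by
        refine sum_congr rfl fun j hj => ?_
        rw [← poch_add_eq_sum_range _ _ (Nat.sub_le N j), poch_eq_poch_mul_poch (z - x) (hmem hj),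
          show y + (c + j) = z - x + j by ring]
        ring
    _ = poch (z - x) N * poch (z - y) N := by
        rw [← sum_mul, show z - y = c + x by ring, poch_add_eq_sum_range c x le_rfl, mul_comm]

theorem pfaff_saalschutz (x y z : ℂ) (N : ℕ) (hz : poch z N ≠ 0) (hc : poch (z - x - y) N ≠ 0) :
    ∑ k ∈ range (N + 1), poch x k * poch y k * poch (-N) k /
        (poch z k * poch (1 + x + y - z - N) k * k.factorial)
      = poch (z - x) N * poch (z - y) N / (poch z N * poch (z - x - y) N) := by
  rw [← pfaff_saalschutz_polynomial_form, sum_div,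
    show 1 + x + y - z - N = 1 - (z - x - y) - N by ring]
  refine sum_congr rfl fun k hk => ?_
  set c := z - x - y
  have hkN : k ≤ N := Nat.lt_succ_iff.mp (mem_range.mp hk)
  rw [poch_eq_poch_mul_poch z hkN] at hz ⊢
  rw [poch_eq_poch_mul_neg_one_pow_mul_poch c hkN] at hc ⊢
  have hden : poch z k * poch (1 - c - N) k * k.factorial ≠ 0 := by
    refine mul_ne_zero (mul_ne_zero (left_ne_zero_of_mul hz) ?_) (mod_cast k.factorial_ne_zero)
    exact right_ne_zero_of_mul (right_ne_zero_of_mul hc)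
  rw [div_eq_div_iff hden (mul_ne_zero hz hc), poch_neg_natCast]
  have hsign : ((-1 : ℂ) ^ k) ^ 2 = 1 := by rw [← pow_mul, pow_mul', neg_one_sq, one_pow]
  linear_combination (poch x k * poch y k * k.factorial * N.choose k * poch z k *
    poch (z + k) (N - k) * poch c (N - k) * poch (1 - c - N) k) * hsign

theorem saalschutz_evaluation (a b : ℂ) (N : ℕ)
    (h1 : ∀ k : ℕ, k ≤ N → poch (1 + a - b) k ≠ 0)
    (h3 : poch (1 / 2 - a / 2 - N) N ≠ 0) :
    ∑ k ∈ range (N + 1),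
        poch (1 / 2 + a / 2 - b) k * poch (a + N) k * poch (-(N : ℂ)) k /
          (poch (1 + a - b) k * poch (1 / 2 + a / 2) k * (Nat.factorial k : ℂ))
      = poch (1 / 2 + a / 2) N * poch (1 - b - N) N /
        (poch (1 + a - b) N * poch (1 / 2 - a / 2 - N) N) := by
  have hc : 1 + a - b - (1 / 2 + a / 2 - b) - (a + N) = 1 / 2 - a / 2 - N := by ring
  have h := pfaff_saalschutz (1 / 2 + a / 2 - b) (a + N) (1 + a - b) N (h1 N le_rfl) (hc ▸ h3)
  rwa [hc, show 1 + (1 / 2 + a / 2 - b) + (a + N) - (1 + a - b) - N = 1 / 2 + a / 2 by ring,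
    show 1 + a - b - (1 / 2 + a / 2 - b) = 1 / 2 + a / 2 by ring,
    show 1 + a - b - (a + N) = 1 - b - N by ring] at h
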